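/- For all integers m ≥ 0 and r ≥ 1, the multi-Bernoulli number with all indices equal to 1 satisfies B_m^{(1,1,...,1)} = (1/r!) · (−1)^m · B_m^{(r)}, where there are r indices equal to 1 and B_m^{(r)} is the Bernoulli number of order r. -/

import Mathlib

open scoped Classical in
/-- The coefficient of `z^n` in the multiple logarithm
`Li_{k_1,...,k_r}(z) = Σ_{0<m_1<⋯<m_r} z^{m_r}/(m_1^{k_1}⋯m_r^{k_r})`, i.e.
`Σ_{0<m_1<⋯<m_{r-1}<m_r=n} 1/(m_1^{k_1}⋯m_r^{k_r})` (integer indices allowed; for a strictly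
increasing positive tuple, `m_r` is the supremum of its entries). -/
noncomputable def liCoeff (r : ℕ) (k : Fin r → ℤ) (n : ℕ) : ℚ :=
  ∑ m : Fin r → Fin (n + 1),
    if StrictMono m ∧ (∀ i, 0 < m i) ∧ (Finset.univ.sup fun i => (m i : ℕ)) = n then
      (∏ i, ((m i : ℕ) : ℚ) ^ (k i))⁻¹
    else 0

/-- The formal power series `1 - e^{-t} ∈ ℚ⟦t⟧`. -/
noncomputable def oneSubExpNeg : PowerSeries ℚ :=
  1 - PowerSeries.rescale (-1) (PowerSeries.exp ℚ)

/-- Multi-Bernoulli numbers, defined by the formal power series identity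
`Σ_{n≥0} B_n^{(k_1,...,k_r)} t^n/n! = Li_{k_1,...,k_r}(1-e^{-t})/(1-e^{-t})^r
  = Σ_{m≥r} (S_1^{(k_1,...,k_r)}(m,r)/m!) (1-e^{-t})^{m-r}` in `ℚ⟦t⟧`,
where `S_1^{(k_1,...,k_r)}(m,r)/m! = liCoeff r k m`. Since `(1-e^{-t})^j` has order `≥ j`,
the `n`-th coefficient of the series only involves the (finitely many) terms with
`j = m - r ≤ n`, so the infinite sum may be truncated exactly. -/
noncomputable def multiBernoulli (r : ℕ) (k : Fin r → ℕ) (n : ℕ) : ℚ :=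
  (n.factorial : ℚ) *
    PowerSeries.coeff (R := ℚ) n
      (∑ j ∈ Finset.range (n + 1), liCoeff r (fun i => (k i : ℤ)) (j + r) • oneSubExpNeg ^ j)

/-- Bernoulli numbers of order `r`, defined by `(t/(e^t-1))^r = Σ_{n≥0} B_n^{(r)} t^n/n!`, where
`t/(e^t-1)` is the inverse in `ℚ⟦t⟧` of the power series `(e^t-1)/t = Σ_i t^i/(i+1)!`. -/
noncomputable def bernoulliOrder (r n : ℕ) : ℚ :=
  (n.factorial : ℚ) *
    PowerSeries.coeff (R := ℚ) n ((PowerSeries.mk fun i => (1 : ℚ) / (i + 1).factorial)⁻¹ ^ r)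

/-!
The derivative of `Li_{1,…,1}` with `r + 1` indices is `Li_{1,…,1}(z)/(1 - z)` with `r` indices,
and `S(t) = 1 - e^{-t}` satisfies `S' = 1 - S`. By the chain rule `d/dt Li_{1,…,1}(S(t))` with
`r + 1` indices is the same series with `r` indices, so `Li_{1,…,1}(1 - e^{-t}) = t^r / r!`.
Writing `1 - e^{-t} = t E(-t)` with `E(t) = (e^t - 1)/t` and dividing by `(1 - e^{-t})^r` gives
`Σ B_m^{(1,…,1)} t^m/m! = E(-t)^{-r}/r!`. Only congruences modulo `t^{m+1}` are needed, so the
truncated sum defining the multi-Bernoulli numbers causes no trouble.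
-/

open Finset PowerSeries

section

variable {r : ℕ}

lemma Fin.strictMono_snoc_iff {α : Type*} [Preorder α] {v : Fin r → α} {x : α} :
    StrictMono (Fin.snoc v x : Fin (r + 1) → α) ↔ StrictMono v ∧ ∀ i, v i < x := by
  refine ⟨fun h => ⟨fun a b hab => ?_, fun i => ?_⟩, fun ⟨hv, hx⟩ a b hab => ?_⟩
  · simpa using h (Fin.castSucc_lt_castSucc_iff.2 hab)
  · simpa using h (Fin.castSucc_lt_last i)
  · cases b using Fin.lastCases with
    | last =>
      cases a using Fin.lastCases with
      | last => exact absurd hab (lt_irrefl _)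
      | cast a => simpa using hx a
    | cast b =>
      cases a using Fin.lastCases with
      | last => exact absurd hab (not_lt.2 (Fin.le_last _))
      | cast a => simpa using hv (Fin.castSucc_lt_castSucc_iff.1 hab)

lemma Fin.sup_univ_snoc {α : Type*} [SemilatticeSup α] [OrderBot α] (v : Fin r → α) (x : α) :
    univ.sup (Fin.snoc v x : Fin (r + 1) → α) = univ.sup v ⊔ x := by
  rw [Fin.univ_castSuccEmb, sup_cons, sup_map, sup_comm]
  simp [Function.comp_def]

namespace PowerSeries

lemma subst_one {R : Type*} [CommRing R] {g : R⟦X⟧} (hg : HasSubst g) :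
    (1 : R⟦X⟧).subst g = 1 := by
  rw [← coe_substAlgHom hg, map_one]

lemma X_pow_dvd_subst_sub_sum {R : Type*} [CommRing R] {g : R⟦X⟧} (hg : constantCoeff g = 0)
    (f : R⟦X⟧) (M : ℕ) : X ^ M ∣ f.subst g - ∑ i ∈ range M, coeff i f • g ^ i := by
  have hS : HasSubst g := HasSubst.of_constantCoeff_zero' hg
  have hsplit : f.subst g = g ^ M * (PowerSeries.mk fun i => coeff (i + M) f).subst g +
      ∑ i ∈ range M, coeff i f • g ^ i := by
    conv_lhs => rw [eq_X_pow_mul_shift_add_trunc M f]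
    rw [subst_add hS, subst_mul hS, subst_pow hS, subst_X hS, subst_coe hS, Polynomial.aeval_def,
      eval₂_trunc_eq_sum_range]
    simp only [Algebra.smul_def]
  rw [hsplit, add_sub_cancel_right]
  exact (pow_dvd_pow_of_dvd (X_dvd_iff.2 hg) M).mul_right _

lemma rescale_inv {k : Type*} [Field k] (a : k) (φ : k⟦X⟧) :
    rescale a φ⁻¹ = (rescale a φ)⁻¹ := by
  have hc : constantCoeff (rescale a φ) = constantCoeff φ := by
    rw [← coeff_zero_eq_constantCoeff_apply, coeff_rescale, pow_zero, one_mul,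
      coeff_zero_eq_constantCoeff_apply]
  by_cases h : constantCoeff φ = 0
  · rw [PowerSeries.inv_eq_zero.2 h, PowerSeries.inv_eq_zero.2 (hc.trans h), map_zero]
  · rw [eq_comm, inv_eq_iff_mul_eq_one (hc ▸ h), ← map_mul, PowerSeries.inv_mul_cancel _ h,
      map_one]

lemma derivative_inv_factorial_smul_X_pow_succ (n : ℕ) :
    d⁄dX ℚ (((n + 1).factorial : ℚ)⁻¹ • X ^ (n + 1)) = (n.factorial : ℚ)⁻¹ • X ^ n := by
  ext k
  rw [coeff_derivative, coeff_smul, coeff_smul, coeff_X_pow, coeff_X_pow]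
  by_cases hk : k = n
  · simp [hk, Nat.factorial_succ]
    field_simp
  · simp [hk]

end PowerSeries

open scoped Classical in
noncomputable def liWeight (k : Fin r → ℤ) (v : Fin r → ℕ) : ℚ :=
  if StrictMono v ∧ ∀ i, 0 < v i then (∏ i, (v i : ℚ) ^ k i)⁻¹ else 0

noncomputable def liTerm (k : Fin r → ℤ) (n : ℕ) (v : Fin r → ℕ) : ℚ :=
  if univ.sup v = n then liWeight k v else 0

lemma liCoeff_eq_sum_liTerm (k : Fin r → ℤ) {n N : ℕ} (h : n < N) :
    liCoeff r k n = ∑ m : Fin r → Fin N, liTerm k n (fun i => m i) := by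
  have base : liCoeff r k n = ∑ m : Fin r → Fin (n + 1), liTerm k n (fun i => m i) := by
    unfold liCoeff liTerm liWeight
    refine sum_congr rfl fun m _ => ?_
    split_ifs <;> first | rfl | tauto
  rw [base]
  refine Fintype.sum_of_injective (fun m i => Fin.castLE h (m i)) ?_ _ _ ?_ fun m => rfl
  · intro a b hab
    funext i
    simpa using congrFun hab i
  · intro m hm
    obtain ⟨i, hi⟩ : ∃ i, n < (m i : ℕ) := by
      by_contra! hle
      exact hm ⟨fun i => ⟨m i, Nat.lt_succ_of_le (hle i)⟩, rfl⟩
    exact if_neg (hi.trans_le (le_sup (f := fun i => (m i : ℕ)) (mem_univ i))).ne'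

lemma liWeight_snoc (k : Fin (r + 1) → ℤ) (v : Fin r → ℕ) (x : ℕ) :
    liWeight k (Fin.snoc v x) =
      if univ.sup v < x then ((x : ℚ) ^ k (Fin.last r))⁻¹ * liWeight (Fin.init k) v else 0 := by
  have hcond : (StrictMono (Fin.snoc v x : Fin (r + 1) → ℕ) ∧
      ∀ i, 0 < (Fin.snoc v x : Fin (r + 1) → ℕ) i) ↔
        (StrictMono v ∧ ∀ i, 0 < v i) ∧ univ.sup v < x := by
    rw [Fin.strictMono_snoc_iff, Fin.forall_fin_succ']
    simp only [Fin.snoc_castSucc, Fin.snoc_last]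
    constructor
    · rintro ⟨⟨hv, hlt⟩, hpos, hx⟩
      exact ⟨⟨hv, hpos⟩, (Finset.sup_lt_iff hx).2 fun i _ => hlt i⟩
    · rintro ⟨⟨hv, hpos⟩, hx⟩
      exact ⟨⟨hv, fun i => (le_sup (mem_univ i)).trans_lt hx⟩, hpos, (Nat.zero_le _).trans_lt hx⟩
  unfold liWeight
  by_cases hx : univ.sup v < x
  · simp only [hcond, hx, and_true, if_true]
    split_ifs
    · rw [Fin.prod_univ_castSucc, mul_inv_rev]
      simp [Fin.init]
    · rw [mul_zero]
  · rw [if_neg hx, if_neg (by rw [hcond]; tauto)]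

lemma liTerm_snoc (k : Fin (r + 1) → ℤ) (n : ℕ) (v : Fin r → ℕ) (x : ℕ) :
    liTerm k n (Fin.snoc v x) =
      if x = n then
        ((n : ℚ) ^ k (Fin.last r))⁻¹ * if univ.sup v < n then liWeight (Fin.init k) v else 0
      else 0 := by
  rw [liTerm, liWeight_snoc, Fin.sup_univ_snoc]
  by_cases hx : univ.sup v < x
  · rw [max_eq_right hx.le]
    by_cases hxn : x = n
    · subst hxn
      simp [hx]
    · simp [hxn]
  · simp only [hx, if_false, ite_self]
    split_ifs <;> simp_all

lemma sum_range_liTerm (k : Fin r → ℤ) (n : ℕ) (v : Fin r → ℕ) :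
    ∑ j ∈ range n, liTerm k j v = if univ.sup v < n then liWeight k v else 0 := by
  simp [liTerm, sum_ite_eq]

lemma liCoeff_succ_succ (k : Fin (r + 1) → ℤ) (n : ℕ) :
    liCoeff (r + 1) k (n + 1) =
      ((n + 1 : ℚ) ^ k (Fin.last r))⁻¹ * ∑ j ∈ range (n + 1), liCoeff r (Fin.init k) j := by
  have hinit : ∑ j ∈ range (n + 1), liCoeff r (Fin.init k) j =
      ∑ v : Fin r → Fin (n + 2), if univ.sup (fun i => (v i : ℕ)) < n + 1 then
        liWeight (Fin.init k) (fun i => v i) else 0 := by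
    rw [sum_congr rfl fun j hj => liCoeff_eq_sum_liTerm (Fin.init k) (N := n + 2)
      (by rw [mem_range] at hj; omega), sum_comm]
    exact sum_congr rfl fun v _ => sum_range_liTerm _ _ _
  have hsnoc (x : Fin (n + 2)) (v : Fin r → Fin (n + 2)) :
      (fun i => ((Fin.snocEquiv (fun _ => Fin (n + 2)) (x, v) i : Fin (n + 2)) : ℕ)) =
        Fin.snoc (fun i => (v i : ℕ)) (x : ℕ) :=
    Fin.comp_snoc Fin.val v x
  rw [liCoeff_eq_sum_liTerm k (Nat.lt_succ_self (n + 1)), hinit, mul_sum,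
    ← (Fin.snocEquiv fun _ => Fin (n + 2)).sum_comp, Fintype.sum_prod_type,
    Fintype.sum_eq_single (Fin.last (n + 1))]
  · refine sum_congr rfl fun v _ => ?_
    rw [hsnoc, liTerm_snoc]
    simp
  · intro x hx
    refine sum_eq_zero fun v _ => ?_
    rw [hsnoc, liTerm_snoc]
    exact if_neg fun h => hx (Fin.ext h)

lemma liTerm_eq_zero_of_lt (k : Fin r → ℤ) {n : ℕ} (v : Fin r → ℕ) (h : n < r) :
    liTerm k n v = 0 := by
  unfold liTerm liWeight
  split_ifs with hsup hv
  · have hcard := card_le_card_of_injOn v (s := univ) (t := Icc 1 n)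
      (fun i _ => mem_Icc.2 ⟨hv.2 i, hsup ▸ le_sup (f := v) (mem_univ i)⟩) hv.1.injective.injOn
    simp only [card_univ, Fintype.card_fin, Nat.card_Icc, add_tsub_cancel_right] at hcard
    omega
  all_goals rfl

lemma liCoeff_eq_zero_of_lt (k : Fin r → ℤ) {n : ℕ} (h : n < r) : liCoeff r k n = 0 := by
  rw [liCoeff_eq_sum_liTerm k n.lt_succ_self]
  exact sum_eq_zero fun v _ => liTerm_eq_zero_of_lt k _ h

lemma liCoeff_zero_left (k : Fin 0 → ℤ) (n : ℕ) : liCoeff 0 k n = if n = 0 then 1 else 0 := by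
  rw [liCoeff, Fintype.sum_unique]
  simp [Subsingleton.strictMono, eq_comm]

noncomputable def liSeries (r : ℕ) (k : Fin r → ℤ) : ℚ⟦X⟧ := PowerSeries.mk (liCoeff r k)

lemma liSeries_zero (k : Fin 0 → ℤ) : liSeries 0 k = 1 := by
  ext n
  simp [liSeries, liCoeff_zero_left, coeff_one]

lemma constantCoeff_liSeries_succ (k : Fin (r + 1) → ℤ) :
    constantCoeff (liSeries (r + 1) k) = 0 := by
  rw [← coeff_zero_eq_constantCoeff_apply, liSeries, coeff_mk,
    liCoeff_eq_zero_of_lt k r.succ_pos]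

lemma derivative_liSeries_succ (k : Fin (r + 1) → ℤ) (hk : k (Fin.last r) = 1) :
    d⁄dX ℚ (liSeries (r + 1) k) = liSeries r (Fin.init k) * PowerSeries.mk 1 := by
  ext n
  rw [coeff_derivative, liSeries, coeff_mk, liCoeff_succ_succ, hk, coeff_mul,
    Nat.sum_antidiagonal_eq_sum_range_succ_mk]
  field_simp
  simp [liSeries]

lemma pow_mul_sum_liCoeff_add (k : Fin r → ℤ) (g : ℚ⟦X⟧) (n : ℕ) :
    g ^ r * ∑ j ∈ range n, liCoeff r k (j + r) • g ^ j =
      ∑ i ∈ range (r + n), coeff i (liSeries r k) • g ^ i := by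
  have hlow : ∑ i ∈ range r, coeff i (liSeries r k) • g ^ i = 0 := sum_eq_zero fun i hi => by
    rw [liSeries, coeff_mk, liCoeff_eq_zero_of_lt k (mem_range.1 hi), zero_smul]
  rw [sum_range_add, hlow, zero_add, mul_sum]
  refine sum_congr rfl fun j _ => ?_
  rw [liSeries, coeff_mk, mul_smul_comm, ← pow_add, add_comm j r]

end

noncomputable def expSubOneDivX : ℚ⟦X⟧ := PowerSeries.mk fun i => (1 : ℚ) / (i + 1).factorial

lemma X_mul_expSubOneDivX : X * expSubOneDivX = exp ℚ - 1 := by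
  ext n
  cases n <;> simp [expSubOneDivX, coeff_succ_X_mul, coeff_exp]

lemma constantCoeff_rescale_expSubOneDivX (a : ℚ) :
    constantCoeff (rescale a expSubOneDivX) = 1 := by
  simp [expSubOneDivX, ← coeff_zero_eq_constantCoeff_apply, coeff_rescale]

lemma oneSubExpNeg_eq_X_mul : oneSubExpNeg = X * rescale (-1) expSubOneDivX := by
  have h := congrArg (rescale (-1 : ℚ)) X_mul_expSubOneDivX
  rw [map_mul, rescale_neg_one_X, map_sub, map_one] at h
  rw [oneSubExpNeg]
  linear_combination h

lemma constantCoeff_oneSubExpNeg : constantCoeff oneSubExpNeg = 0 := by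
  rw [oneSubExpNeg_eq_X_mul, map_mul, constantCoeff_X, zero_mul]

lemma derivative_oneSubExpNeg : d⁄dX ℚ oneSubExpNeg = 1 - oneSubExpNeg := by
  rw [oneSubExpNeg, sub_sub_cancel, map_sub, Derivation.map_one_eq_zero, zero_sub,
    rescale_eq_subst, derivative_subst (HasSubst.smul_X' _), derivative_exp, Derivation.map_smul,
    derivative_X]
  simp

lemma subst_liSeries_ones_oneSubExpNeg (r : ℕ) :
    (liSeries r fun _ => 1).subst oneSubExpNeg = (r.factorial : ℚ)⁻¹ • X ^ r := by
  have hS : HasSubst oneSubExpNeg := HasSubst.of_constantCoeff_zero' constantCoeff_oneSubExpNeg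
  induction r with
  | zero => simp [liSeries_zero, subst_one hS]
  | succ r ih =>
    apply derivative.ext
    · have hgeom : (PowerSeries.mk 1 : ℚ⟦X⟧).subst oneSubExpNeg * (1 - oneSubExpNeg) = 1 := by
        calc _ = (PowerSeries.mk 1 * (1 - X) : ℚ⟦X⟧).subst oneSubExpNeg := by
              rw [subst_mul hS, subst_sub hS, subst_X hS, subst_one hS]
          _ = 1 := by rw [mk_one_mul_one_sub_eq_one, subst_one hS]
      rw [derivative_subst hS, derivative_liSeries_succ _ rfl, derivative_oneSubExpNeg,
        subst_mul hS, mul_assoc, hgeom, mul_one, Fin.init_def, ih]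
      exact (derivative_inv_factorial_smul_X_pow_succ r).symm
    · refine (constantCoeff_subst_eq_zero constantCoeff_oneSubExpNeg _
        (constantCoeff_liSeries_succ _)).trans ?_
      simp

lemma coeff_sum_liCoeff_ones (m r : ℕ) :
    coeff m (∑ j ∈ range (m + 1), liCoeff r (fun _ => 1) (j + r) • oneSubExpNeg ^ j) =
      (r.factorial : ℚ)⁻¹ * coeff m (rescale (-1) (expSubOneDivX⁻¹) ^ r) := by
  set F := rescale (-1 : ℚ) expSubOneDivX
  set T := ∑ j ∈ range (m + 1), liCoeff r (fun _ => 1) (j + r) • oneSubExpNeg ^ j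
  have hsubst : X ^ (r + (m + 1)) ∣ (r.factorial : ℚ)⁻¹ • X ^ r - oneSubExpNeg ^ r * T := by
    rw [pow_mul_sum_liCoeff_add, ← subst_liSeries_ones_oneSubExpNeg]
    exact X_pow_dvd_subst_sub_sum constantCoeff_oneSubExpNeg _ _
  have hcancel : X ^ (m + 1) ∣ C (r.factorial : ℚ)⁻¹ - F ^ r * T := by
    rw [oneSubExpNeg_eq_X_mul, mul_pow, pow_add, smul_eq_C_mul, mul_assoc, mul_comm (C _),
      ← mul_sub] at hsubst
    exact (mul_dvd_mul_iff_left (pow_ne_zero r X_ne_zero)).1 hsubst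
  have hdiv : X ^ (m + 1) ∣ C (r.factorial : ℚ)⁻¹ * F⁻¹ ^ r - T := by
    convert hcancel.mul_left (F⁻¹ ^ r) using 1
    rw [mul_sub, ← mul_assoc, ← mul_pow,
      PowerSeries.inv_mul_cancel _ (by simp [F, constantCoeff_rescale_expSubOneDivX]),
      one_pow, one_mul, mul_comm]
  have hcoeff := X_pow_dvd_iff.1 hdiv m (lt_add_one m)
  rw [map_sub, sub_eq_zero, coeff_C_mul] at hcoeff
  rw [rescale_inv]
  exact hcoeff.symm

theorem multiBernoulli_all_ones_general (m r : ℕ) :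
    multiBernoulli r (fun _ => 1) m =
      (1 / (r.factorial : ℚ)) * (-1 : ℚ) ^ m * bernoulliOrder r m := by
  have h := coeff_sum_liCoeff_ones m r
  rw [← map_pow, coeff_rescale] at h
  simp only [multiBernoulli, bernoulliOrder, Nat.cast_one, h, expSubOneDivX]
  ring

/-- For all integers `m ≥ 0` and `r ≥ 1`, the multi-Bernoulli number with all `r` indices
equal to `1` satisfies `B_m^{(1,...,1)} = (1/r!) ⬝ (−1)^m ⬝ B_m^{(r)}`, where `B_m^{(r)}`
is the Bernoulli number of order `r`. -/
theorem multiBernoulli_all_ones (m r : ℕ) (hr : 1 ≤ r) :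
    multiBernoulli r (fun _ => 1) m =
      (1 / (r.factorial : ℚ)) * (-1 : ℚ) ^ m * bernoulliOrder r m :=
  multiBernoulli_all_ones_general m r
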